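/- Define for v : ℝ^{n×n} → ℝ the function v̂ by v̂(s) = v(s⁻¹) if s is invertible and v̂(s) = 0 otherwise. If v belongs to C_{0,inv}(ℝ^{n×n}) (continuous, vanishing at infinity, and vanishing on singular matrices), then v̂ also belongs to C_{0,inv}(ℝ^{n×n}). In particular v̂ is continuous at every singular matrix. -/

import Mathlib

open MeasureTheory Filter Topology

noncomputable def frob {n : ℕ} (A : Matrix (Fin n) (Fin n) ℝ) : ℝ :=
  Real.sqrt (∑ i, ∑ j, (A i j) ^ 2)

open Classical

/-- The hat operation: v̂(s) = v(s⁻¹) for invertible s, and 0 for singular s. -/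
noncomputable def matHat {n : ℕ} (v : Matrix (Fin n) (Fin n) ℝ → ℝ) :
    Matrix (Fin n) (Fin n) ℝ → ℝ :=
  fun s => if IsUnit s.det then v s⁻¹ else 0

/-!
If `v` vanishes on singular matrices then `v̂ = v ∘ (·)⁻¹`, because the inverse of a singular matrix
is `0` by convention. Inversion is continuous at invertible matrices, and near a singular matrix it
sends invertible matrices to infinity, since `det A⁻¹ = (det A)⁻¹` blows up; as `v` vanishes at
infinity and on singular matrices, `v̂` is continuous there too. Conversely `{v ∉ N}`, for a
neighbourhood `N` of `0`, is a compact set of invertible matrices, so its image under inversion is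
compact, and `v̂` takes values in `N` off that image.
-/
open Set

namespace Matrix

variable {n 𝕜 : Type*} [Fintype n] [DecidableEq n] [NormedField 𝕜]

theorem det_inv_eq_zero {A : Matrix n n 𝕜} (h : A.det = 0) : A⁻¹.det = 0 := by
  rw [det_nonsing_inv, h, Ring.inverse_zero]

theorem continuousAt_inv_of_det_ne_zero {A : Matrix n n 𝕜} (h : A.det ≠ 0) :
    ContinuousAt Inv.inv A :=
  continuousAt_matrix_inv A (by simpa only [Ring.inverse_eq_inv'] using continuousAt_inv₀ h)

theorem tendsto_inv_cocompact_of_det_eq_zero {A : Matrix n n 𝕜} (h : A.det = 0) :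
    Tendsto Inv.inv (𝓝[{B | B.det ≠ 0}] A) (cocompact (Matrix n n 𝕜)) := by
  refine Tendsto.of_tendsto_comp ?_ (comap_cocompact_le continuous_id.matrix_det)
  have hdet : Tendsto det (𝓝[{B | B.det ≠ 0}] A) (𝓝[≠] 0) :=
    tendsto_nhdsWithin_of_tendsto_nhds_of_eventually_within _
      (h ▸ (continuous_id.matrix_det.tendsto A).mono_left nhdsWithin_le_nhds)
      self_mem_nhdsWithin
  refine ((tendsto_inv₀_nhdsNE_zero.comp hdet).mono_right
    Metric.cobounded_le_cocompact).congr fun B => ?_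
  simp only [Function.comp_apply, id_eq, det_nonsing_inv, Ring.inverse_eq_inv']

variable {E : Type*} [TopologicalSpace E] [Zero E] {v : Matrix n n 𝕜 → E}

theorem continuous_comp_inv (hv : Continuous v) (hv_inf : Tendsto v (cocompact _) (𝓝 0))
    (hv_sing : ∀ A, A.det = 0 → v A = 0) : Continuous fun A => v A⁻¹ := by
  refine continuous_iff_continuousAt.2 fun A => ?_
  by_cases hA : A.det = 0
  · have h_inv : Tendsto (fun B => v B⁻¹) (𝓝[{B | B.det ≠ 0}] A) (𝓝 0) :=
      hv_inf.comp (tendsto_inv_cocompact_of_det_eq_zero hA)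
    have h_sing : Tendsto (fun B => v B⁻¹) (𝓝[{B | B.det ≠ 0}ᶜ] A) (𝓝 0) :=
      tendsto_const_nhds.congr' <| eventually_nhdsWithin_of_forall fun B hB =>
        (hv_sing _ (det_inv_eq_zero (not_not.1 hB))).symm
    rw [ContinuousAt, hv_sing _ (det_inv_eq_zero hA), ← nhdsWithin_univ, ← union_compl_self,
      nhdsWithin_union]
    exact h_inv.sup h_sing
  · exact hv.continuousAt.comp (continuousAt_inv_of_det_ne_zero hA)

theorem tendsto_comp_inv_cocompact (hv : Continuous v) (hv_inf : Tendsto v (cocompact _) (𝓝 0))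
    (hv_sing : ∀ A, A.det = 0 → v A = 0) :
    Tendsto (fun A => v A⁻¹) (cocompact (Matrix n n 𝕜)) (𝓝 0) := by
  refine (nhds_basis_opens 0).tendsto_right_iff.2 fun N ⟨h0N, hN⟩ => ?_
  obtain ⟨K, hK, hKN⟩ := hasBasis_cocompact.eventually_iff.1 (hv_inf (hN.mem_nhds h0N))
  set S := v ⁻¹' Nᶜ
  have hS : IsCompact S :=
    hK.of_isClosed_subset (hN.isClosed_compl.preimage hv) fun A hA => by_contra fun h => hA (hKN h)
  have hS_det : ∀ A ∈ S, A.det ≠ 0 := fun A hA hA0 => hA (hv_sing A hA0 ▸ h0N)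
  have hS_inv : IsCompact (Inv.inv '' S) := hS.image_of_continuousOn fun A hA =>
    (continuousAt_inv_of_det_ne_zero (hS_det A hA)).continuousWithinAt
  filter_upwards [hS_inv.compl_mem_cocompact] with A hA
  by_contra hA_inv
  have hA_det : A.det ≠ 0 := fun h0 => hS_det _ hA_inv (det_inv_eq_zero h0)
  exact hA ⟨A⁻¹, hA_inv, nonsing_inv_nonsing_inv A (isUnit_iff_ne_zero.2 hA_det)⟩

end Matrix

theorem matHat_eq_comp_inv {n : ℕ} {v : Matrix (Fin n) (Fin n) ℝ → ℝ}
    (hv : ∀ s, s.det = 0 → v s = 0) : matHat v = fun s => v s⁻¹ := by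
  funext s
  by_cases hs : IsUnit s.det
  · simp only [matHat, if_pos hs]
  · rw [matHat, if_neg hs, hv _ (Matrix.det_inv_eq_zero (not_not.1 (mt isUnit_iff_ne_zero.2 hs)))]

theorem matHat_mem_C0inv (n : ℕ)
    (v : ZeroAtInftyContinuousMap (Matrix (Fin n) (Fin n) ℝ) ℝ)
    (hv : ∀ s, s.det = 0 → v s = 0) :
    Continuous (matHat (fun s => v s)) ∧
    Tendsto (matHat (fun s => v s)) (cocompact (Matrix (Fin n) (Fin n) ℝ)) (𝓝 0) ∧
    (∀ s, s.det = 0 → matHat (fun s => v s) s = 0) := by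
  rw [matHat_eq_comp_inv hv]
  exact ⟨Matrix.continuous_comp_inv v.continuous (zero_at_infty v) hv,
    Matrix.tendsto_comp_inv_cocompact v.continuous (zero_at_infty v) hv,
    fun s hs => hv _ (Matrix.det_inv_eq_zero hs)⟩
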